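/- Let C = ⊕_{g∈G} C_g be a G-graded coalgebra and let M be a G-graded right C-comodule. Then the map ρ'(m) = Σ m₀ ⊗ (m₁ ⋊ δ(m)⁻¹) for homogeneous m of degree δ(m), where ρ(m) = Σ m₀ ⊗ m₁ with homogeneous terms, makes M into a right comodule over the smash coproduct coalgebra C ⋊ kG. -/

import Mathlib

/-!
For `m` homogeneous of degree `g` we have `ρ'(m) = (id ⊗ (– ⋊ g⁻¹))(ρ m)`, and
`Δ(c ⋊ g⁻¹) = Σ (c₁ ⋊ δ(c₂)g⁻¹) ⊗ (c₂ ⋊ g⁻¹)`. After applying coassociativity of `ρ`, both sides of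
the coassociativity of `ρ'` are linear in `ρ m ∈ Σ_{ab=g} M_a ⊗ C_b`, and on `x ⊗ y` with
`x ∈ M_a`, `y ∈ C_b` the group labels agree because `b g⁻¹ = a⁻¹ = δ(x)⁻¹`. Counitality is immediate
from `ε(c ⋊ h) = ε(c)`.
-/

open TensorProduct DirectSum

noncomputable section
open scoped Classical

variable (k : Type*) [Field k] (G : Type*) [Group G]
variable (C : Type*) [AddCommGroup C] [Module k C]

/-- The group coalgebra `kG`: the free module on `G`, with group-like basis. -/
abbrev kGrp : Type _ := G →₀ k

/-- Comultiplication of `kG`: every `g ∈ G` is group-like. -/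
def deltaKG : kGrp k G →ₗ[k] kGrp k G ⊗[k] kGrp k G :=
  Finsupp.lsum k fun g =>
    LinearMap.toSpanSingleton k _
      ((Finsupp.single g 1 : kGrp k G) ⊗ₜ[k] (Finsupp.single g 1 : kGrp k G))

/-- Counit of `kG`. -/
def epsKG : kGrp k G →ₗ[k] k := Finsupp.lsum k fun _ => LinearMap.id

/-- Right multiplication by the group element `h` on `kG`. -/
def mulKG (h : G) : kGrp k G →ₗ[k] kGrp k G :=
  Finsupp.lsum k fun g => Finsupp.lsingle (g * h)

/-- The map `C → C ⊗ kG`, `c ↦ c ⊗ g`. -/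
def tmulKG (g : G) : C →ₗ[k] C ⊗[k] kGrp k G :=
  (TensorProduct.mk k C (kGrp k G)).flip (Finsupp.single g 1)

variable (ℭ : G → Submodule k C) [Decomposition ℭ]

/-- The comodule structure map `ρ : C → C ⊗ kG` encoding the grading:
`ρ(c) = c ⊗ δ(c)` for `c` homogeneous of degree `δ(c)`. -/
def rhoC : C →ₗ[k] C ⊗[k] kGrp k G :=
  (DirectSum.toModule k G (C ⊗[k] kGrp k G) fun g =>
      (tmulKG k G C g).comp (ℭ g).subtype).comp
    (DirectSum.decomposeLinearEquiv ℭ).toLinearMap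

/-- The value of the smash comultiplication in degree `g`:
`c ↦ Σ (c₁ ⋊ δ(c₂)g) ⊗ (c₂ ⋊ g)`, for a comultiplication `Δc` on `C`. -/
def smashDg (Δc : C →ₗ[k] C ⊗[k] C) (g : G) :
    C →ₗ[k] (C ⊗[k] kGrp k G) ⊗[k] (C ⊗[k] kGrp k G) :=
  (TensorProduct.map
      (TensorProduct.map LinearMap.id (mulKG k G g))
      (tmulKG k G C g)).comp
    (((TensorProduct.assoc k C (kGrp k G) C).symm.toLinearMap).comp
      ((TensorProduct.map LinearMap.id (TensorProduct.comm k C (kGrp k G)).toLinearMap).comp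
        ((TensorProduct.map LinearMap.id (rhoC k G C ℭ)).comp Δc)))

/-- The comultiplication of the smash coproduct coalgebra `C ⋊ kG`:
`Δ(c ⋊ g) = Σ (c₁ ⋊ δ(c₂)g) ⊗ (c₂ ⋊ g)` for homogeneous `c`. -/
def smashDeltaC (Δc : C →ₗ[k] C ⊗[k] C) :
    C ⊗[k] kGrp k G →ₗ[k] (C ⊗[k] kGrp k G) ⊗[k] (C ⊗[k] kGrp k G) :=
  (Finsupp.lsum k fun g => smashDg k G C ℭ Δc g).comp
    (TensorProduct.finsuppScalarRight k k C G).toLinearMap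

/-- The counit of `C ⋊ kG`: `ε(c ⋊ g) = ε_C(c)`. -/
def smashEpsC (εc : C →ₗ[k] k) : C ⊗[k] kGrp k G →ₗ[k] k :=
  (TensorProduct.lid k k).toLinearMap.comp (TensorProduct.map εc (epsKG k G))

/-- The canonical projection `F : C ⋊ kG → C`, `c ⋊ g ↦ c`. -/
def smashProjC : C ⊗[k] kGrp k G →ₗ[k] C :=
  (TensorProduct.rid k C).toLinearMap.comp (TensorProduct.map LinearMap.id (epsKG k G))

/-- The span of elementary tensors from two submodules: the image of `A ⊗ B`
in `M ⊗ N`. -/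
def tsub {M N : Type*} [AddCommGroup M] [Module k M] [AddCommGroup N] [Module k N]
    (A : Submodule k M) (B : Submodule k N) : Submodule k (M ⊗[k] N) :=
  Submodule.span k {x | ∃ a ∈ A, ∃ b ∈ B, x = a ⊗ₜ[k] b}

variable (M : Type*) [AddCommGroup M] [Module k M]
variable (ℳ : G → Submodule k M) [Decomposition ℳ]

/-- The structure map `ρ' : M → M ⊗ (C ⋊ kG)`,
`ρ'(m) = Σ m₀ ⊗ (m₁ ⋊ δ(m)⁻¹)` for `m` homogeneous of degree `δ(m)`. -/
def rhoSmash (ρM : M →ₗ[k] M ⊗[k] C) : M →ₗ[k] M ⊗[k] (C ⊗[k] kGrp k G) :=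
  (DirectSum.toModule k G (M ⊗[k] (C ⊗[k] kGrp k G)) fun d =>
      ((TensorProduct.map LinearMap.id (tmulKG k G C d⁻¹)).comp ρM).comp (ℳ d).subtype).comp
    (DirectSum.decomposeLinearEquiv ℳ).toLinearMap

def smashTwist (g : G) : C ⊗[k] C →ₗ[k] (C ⊗[k] kGrp k G) ⊗[k] (C ⊗[k] kGrp k G) :=
  TensorProduct.map (TensorProduct.map LinearMap.id (mulKG k G g)) (tmulKG k G C g) ∘ₗ
    (TensorProduct.assoc k C (kGrp k G) C).symm.toLinearMap ∘ₗ
      TensorProduct.map LinearMap.id (TensorProduct.comm k C (kGrp k G)).toLinearMap ∘ₗ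
        TensorProduct.map LinearMap.id (rhoC k G C ℭ)

section SmashComodule

variable {k G C}

lemma eq_of_mem_iSup_tsub {ι V W X : Type*} [Mul ι] [AddCommGroup V] [Module k V]
    [AddCommGroup W] [Module k W] [AddCommGroup X] [Module k X]
    {A : ι → Submodule k V} {B : ι → Submodule k W} {f f' : V ⊗[k] W →ₗ[k] X} {g : ι}
    (h : ∀ a b, a * b = g → ∀ x ∈ A a, ∀ y ∈ B b, f (x ⊗ₜ y) = f' (x ⊗ₜ y)) {t : V ⊗[k] W}
    (ht : t ∈ ⨆ (ab : ι × ι) (_ : ab.1 * ab.2 = g), tsub k (A ab.1) (B ab.2)) : f t = f' t :=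
  have hle : ⨆ (ab : ι × ι) (_ : ab.1 * ab.2 = g), tsub k (A ab.1) (B ab.2)
      ≤ LinearMap.eqLocus f f' :=
    iSup₂_le fun ab hab => Submodule.span_le.mpr <| by
      rintro _ ⟨x, hx, y, hy, rfl⟩
      exact h _ _ hab x hx y hy
  hle ht

omit [Group G] in
@[simp]
lemma tmulKG_apply (g : G) (c : C) :
    tmulKG k G C g c = c ⊗ₜ[k] (Finsupp.single g 1 : kGrp k G) := rfl

@[simp]
lemma mulKG_single (h g : G) :
    mulKG k G h (Finsupp.single g 1 : kGrp k G) = Finsupp.single (g * h) 1 := by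
  simp [mulKG]

omit [Group G] in
lemma smashEpsC_comp_tmulKG (εc : C →ₗ[k] k) (g : G) :
    smashEpsC k G C εc ∘ₗ tmulKG k G C g = εc := by
  ext c
  simp [smashEpsC, epsKG]

lemma smashDeltaC_comp_tmulKG (Δc : C →ₗ[k] C ⊗[k] C) (g : G) :
    smashDeltaC k G C ℭ Δc ∘ₗ tmulKG k G C g = smashTwist k G C ℭ g ∘ₗ Δc := by
  ext c
  simp [smashDeltaC, smashDg, smashTwist, TensorProduct.finsuppScalarRight_apply_tmul]

variable {ℭ}

omit [Group G] in
lemma rhoC_of_mem {g : G} {c : C} (hc : c ∈ ℭ g) :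
    rhoC k G C ℭ c = c ⊗ₜ[k] (Finsupp.single g 1 : kGrp k G) := by
  simp only [rhoC, LinearMap.comp_apply, LinearEquiv.coe_coe,
    DirectSum.decomposeLinearEquiv_apply, DirectSum.decompose_of_mem ℭ hc,
    ← DirectSum.lof_eq_of k, DirectSum.toModule_lof]
  rfl

lemma smashTwist_tmul_of_mem (g : G) (c : C) {b : G} {d : C} (hd : d ∈ ℭ b) :
    smashTwist k G C ℭ g (c ⊗ₜ d)
      = (c ⊗ₜ (Finsupp.single (b * g) 1 : kGrp k G)) ⊗ₜ (d ⊗ₜ Finsupp.single g 1) := by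
  simp [smashTwist, rhoC_of_mem hd]

variable {M ℳ}

lemma rhoSmash_of_mem (ρM : M →ₗ[k] M ⊗[k] C) {g : G} {m : M} (hm : m ∈ ℳ g) :
    rhoSmash k G C M ℳ ρM m = TensorProduct.map LinearMap.id (tmulKG k G C g⁻¹) (ρM m) := by
  simp only [rhoSmash, LinearMap.comp_apply, LinearEquiv.coe_coe,
    DirectSum.decomposeLinearEquiv_apply, DirectSum.decompose_of_mem ℳ hm,
    ← DirectSum.lof_eq_of k, DirectSum.toModule_lof]
  rfl

lemma smashTwist_assoc_tmul_of_mem (ρM : M →ₗ[k] M ⊗[k] C) {a b : G} {x : M} {y : C}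
    (hx : x ∈ ℳ a) (hy : y ∈ ℭ b) :
    TensorProduct.map LinearMap.id (smashTwist k G C ℭ (a * b)⁻¹)
        (TensorProduct.assoc k M C C (ρM x ⊗ₜ y))
      = TensorProduct.assoc k M (C ⊗[k] kGrp k G) (C ⊗[k] kGrp k G)
          (rhoSmash k G C M ℳ ρM x ⊗ₜ (y ⊗ₜ Finsupp.single (a * b)⁻¹ 1)) := by
  rw [rhoSmash_of_mem ρM hx]
  induction ρM x using TensorProduct.induction_on with
  | zero => simp
  | tmul u v => simp [smashTwist_tmul_of_mem _ _ hy]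
  | add s t hs ht => simp only [TensorProduct.add_tmul, map_add, hs, ht]

variable {Δc : C →ₗ[k] C ⊗[k] C} {εc : C →ₗ[k] k} {ρM : M →ₗ[k] M ⊗[k] C}

lemma rhoSmash_coassoc_of_mem
    (hρcoassoc : ∀ m : M,
      TensorProduct.map LinearMap.id Δc (ρM m)
        = TensorProduct.assoc k M C C (TensorProduct.map ρM LinearMap.id (ρM m)))
    (hρgrade : ∀ g : G, ∀ m ∈ ℳ g,
      ρM m ∈ ⨆ (ab : G × G) (_ : ab.1 * ab.2 = g), tsub k (ℳ ab.1) (ℭ ab.2))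
    {g : G} {m : M} (hm : m ∈ ℳ g) :
    TensorProduct.map LinearMap.id (smashDeltaC k G C ℭ Δc) (rhoSmash k G C M ℳ ρM m)
      = TensorProduct.assoc k M (C ⊗[k] kGrp k G) (C ⊗[k] kGrp k G)
          (TensorProduct.map (rhoSmash k G C M ℳ ρM) LinearMap.id
            (rhoSmash k G C M ℳ ρM m)) := by
  rw [rhoSmash_of_mem ρM hm]
  calc _ = TensorProduct.map LinearMap.id (smashTwist k G C ℭ g⁻¹)
          (TensorProduct.map LinearMap.id Δc (ρM m)) := by
        rw [← LinearMap.comp_apply (TensorProduct.map _ _), ← TensorProduct.map_comp,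
          smashDeltaC_comp_tmulKG, TensorProduct.map_comp, LinearMap.comp_apply]
    _ = TensorProduct.map LinearMap.id (smashTwist k G C ℭ g⁻¹)
          (TensorProduct.assoc k M C C (TensorProduct.map ρM LinearMap.id (ρM m))) := by
        rw [hρcoassoc]
    _ = _ := by
      refine eq_of_mem_iSup_tsub
        (f := TensorProduct.map LinearMap.id (smashTwist k G C ℭ g⁻¹) ∘ₗ
          (TensorProduct.assoc k M C C).toLinearMap ∘ₗ TensorProduct.map ρM LinearMap.id)
        (f' := (TensorProduct.assoc k M _ _).toLinearMap ∘ₗ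
          TensorProduct.map (rhoSmash k G C M ℳ ρM) LinearMap.id ∘ₗ
            TensorProduct.map LinearMap.id (tmulKG k G C g⁻¹))
        (fun a b hab x hx y hy => ?_) (hρgrade g m hm)
      subst hab
      simpa using smashTwist_assoc_tmul_of_mem ρM hx hy

lemma rhoSmash_counit_of_mem
    (hρcounit : ∀ m : M, TensorProduct.rid k M (TensorProduct.map LinearMap.id εc (ρM m)) = m)
    {g : G} {m : M} (hm : m ∈ ℳ g) :
    TensorProduct.rid k M
      (TensorProduct.map LinearMap.id (smashEpsC k G C εc) (rhoSmash k G C M ℳ ρM m)) = m := by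
  rw [rhoSmash_of_mem ρM hm, ← LinearMap.comp_apply (TensorProduct.map _ _),
    ← TensorProduct.map_comp, smashEpsC_comp_tmulKG, LinearMap.id_comp, hρcounit]

end SmashComodule

theorem graded_comodule_is_smash_comodule
    (Δc : C →ₗ[k] C ⊗[k] C) (εc : C →ₗ[k] k)
    -- `M` is a right `C`-comodule
    (ρM : M →ₗ[k] M ⊗[k] C)
    (hρcoassoc : ∀ m : M,
      (TensorProduct.map LinearMap.id Δc) (ρM m)
        = (TensorProduct.assoc k M C C) ((TensorProduct.map ρM LinearMap.id) (ρM m)))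
    (hρcounit : ∀ m : M,
      (TensorProduct.rid k M) ((TensorProduct.map LinearMap.id εc) (ρM m)) = m)
    -- the comodule is graded: `ρ(M_g) ⊆ Σ_{ab=g} M_a ⊗ C_b`
    (hρgrade : ∀ g : G, ∀ m ∈ ℳ g,
      ρM m ∈ ⨆ (ab : G × G) (_ : ab.1 * ab.2 = g), tsub k (ℳ ab.1) (ℭ ab.2)) :
    -- `ρ'` is coassociative over `C ⋊ kG` ...
    (∀ m : M,
      (TensorProduct.map LinearMap.id (smashDeltaC k G C ℭ Δc))
          (rhoSmash k G C M ℳ ρM m)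
        = (TensorProduct.assoc k M (C ⊗[k] kGrp k G) (C ⊗[k] kGrp k G))
            ((TensorProduct.map (rhoSmash k G C M ℳ ρM) LinearMap.id)
              (rhoSmash k G C M ℳ ρM m)))
    -- ... and counital
    ∧ (∀ m : M,
        (TensorProduct.rid k M)
          ((TensorProduct.map LinearMap.id (smashEpsC k G C εc))
            (rhoSmash k G C M ℳ ρM m)) = m) := by
  refine ⟨fun m => ?_, fun m => ?_⟩
  · induction m using DirectSum.Decomposition.inductionOn ℳ with
    | zero => simp
    | homogeneous m => exact rhoSmash_coassoc_of_mem hρcoassoc hρgrade m.2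
    | add m m' h h' => simp only [map_add, h, h']
  · induction m using DirectSum.Decomposition.inductionOn ℳ with
    | zero => simp
    | homogeneous m => exact rhoSmash_counit_of_mem hρcounit m.2
    | add m m' h h' => simp only [map_add, h, h']
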